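/- Let $F$ be a dyadic local field with $e = \mathrm{ord}(2)$. If $a, b \in F^\times$ satisfy $d(a) + d(b) > 2e$, then the Hilbert symbol $(a, b)_{\mathfrak{p}} = 1$. -/

import Mathlib

/-
The relative quadratic defect measures how well `c` is approximated by squares: if
`n < d(c)` then `c (1 - α)` is a square for some `α` with `ord α ≥ n + 1`.
`F` is complete for the absolute value `2 ^ (-ord / e)`, being a finite-dimensional normed
`ℚ_[2]`-space, so by the Banach fixed point theorem for `t ↦ δ - t²` every `1 + 4δ` with
`ord δ > 0` is a square; that is, `1 - ε` is a square once `ord ε ≥ 2e + 1`.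
Hence `a` (or `b`) is a square if its defect exceeds `2e`. Otherwise write `a (1 - α) = x²`,
`b (1 - β) = y²` with `ord α + ord β ≥ 2e + 1`; then `1 - αβ = γ²`, and
`s = -α / (1 + γ)` solves `(1 - α) + (1 - β) s² = (1 + s)²`, an isotropic vector of `⟨a, b⟩`.
-/

noncomputable section

/-- A normalized additive `ℤ`-valued valuation presenting `F` as a dyadic local field
(`F` is a finite extension of `ℚ₂` and `ord` its normalized valuation). -/
structure IsDyadicOrd {F : Type*} [Field F] [Algebra ℚ_[2] F] (ord : F → WithTop ℤ) : Prop where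
  map_zero : ord 0 = ⊤
  ne_top : ∀ x : F, x ≠ 0 → ord x ≠ ⊤
  map_mul : ∀ x y : F, ord (x * y) = ord x + ord y
  min_le_add : ∀ x y : F, min (ord x) (ord y) ≤ ord (x + y)
  surj : ∀ n : ℤ, ∃ x : F, ord x = (n : WithTop ℤ)
  compat : ∀ q : ℚ_[2], q ≠ 0 → q.valuation = 0 → ord (algebraMap ℚ_[2] F q) = 0

/-- The order of the relative quadratic defect `d(a) = ord (a⁻¹ 𝔡(a))`, where
`𝔡(a) = ⋂ₓ (a - x²)𝒪` is the quadratic defect; it is valued in `ℕ∞`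
(`d(a) ≥ 0` always, and `d(a) = ⊤` iff `𝔡(a) = 0`, i.e. `a` is a square). -/
def ddefect {F : Type*} [Field F] (ord : F → WithTop ℤ) (a : F) : ℕ∞ :=
  ⨆ x : F, WithTop.map Int.toNat (ord (a⁻¹ * (a - x ^ 2)))

/-- `d(a)` viewed in `WithTop ℤ`. -/
def dz {F : Type*} [Field F] (ord : F → WithTop ℤ) (a : F) : WithTop ℤ :=
  WithTop.map (Nat.cast : ℕ → ℤ) (ddefect ord a)

/-- The Hilbert symbol `(a,b)_𝔭 = 1` iff `z² = a x² + b y²` has a nontrivial solution. -/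
def hilbertSym (F : Type*) [Field F] (a b : F) : ℤ :=
  @ite _ (∃ x y z : F, (x, y, z) ≠ (0, 0, 0) ∧ a * x ^ 2 + b * y ^ 2 = z ^ 2)
    (Classical.propDecidable _) 1 (-1)

theorem exists_add_sq_eq_of_norm_lt_one {K : Type*} [NormedField K] [CompleteSpace K]
    [IsUltrametricDist K] {δ : K} (hδ : ‖δ‖ < 1) : ∃ t : K, t + t ^ 2 = δ := by
  set B := Metric.closedBall (0 : K) ‖δ‖
  have hmaps : Set.MapsTo (fun t => δ - t ^ 2) B B := fun t ht => by
    rw [mem_closedBall_zero_iff] at ht ⊢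
    show ‖δ - t ^ 2‖ ≤ ‖δ‖
    rw [sub_eq_add_neg]
    refine (IsUltrametricDist.norm_add_le_max _ _).trans (max_le le_rfl ?_)
    rw [norm_neg, norm_pow]
    nlinarith [norm_nonneg t]
  have hcontr : ContractingWith ‖δ‖₊ (hmaps.restrict _ B B) := by
    refine ⟨hδ, LipschitzWith.of_dist_le_mul fun t u => ?_⟩
    have hsum : ‖(u : K) + t‖ ≤ ‖δ‖ :=
      (IsUltrametricDist.norm_add_le_max _ _).trans
        (max_le (mem_closedBall_zero_iff.mp u.2) (mem_closedBall_zero_iff.mp t.2))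
    calc dist (hmaps.restrict _ B B t) (hmaps.restrict _ B B u)
        = ‖(u : K) + t‖ * dist u t := by
          rw [Subtype.dist_eq, Subtype.dist_eq, dist_eq_norm, dist_eq_norm, ← norm_mul]
          simp only [Set.MapsTo.val_restrict_apply]
          congr 1; ring
      _ ≤ ‖δ‖ * dist t u := by rw [dist_comm]; exact mul_le_mul_of_nonneg_right hsum dist_nonneg
  obtain ⟨t, -, ht, -⟩ := hcontr.exists_fixedPoint' Metric.isClosed_closedBall.isComplete hmaps
    (Metric.mem_closedBall_self (norm_nonneg δ)) (edist_ne_top _ _)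
  have ht : δ - t ^ 2 = t := ht
  exact ⟨t, by linear_combination -ht⟩

theorem exists_one_sub_add_one_sub_mul_sq_eq_sq {K : Type*} [Field K] (h2 : (2 : K) ≠ 0)
    {α β γ : K} (hγ : γ ^ 2 = 1 - α * β) : ∃ s : K, (1 - α) + (1 - β) * s ^ 2 = (1 + s) ^ 2 := by
  wlog hγ1 : 1 + γ ≠ 0 generalizing γ
  · refine this (γ := -γ) (by rw [neg_sq, hγ]) fun h => h2 ?_
    linear_combination h + not_not.mp hγ1
  refine ⟨-α / (1 + γ), ?_⟩
  field_simp
  linear_combination (-α) * hγ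

theorem exists_isotropic_of_mul_one_sub_eq_sq {K : Type*} [Field K] (h2 : (2 : K) ≠ 0)
    {a b α β x y γ : K} (ha : a ≠ 0) (hb : b ≠ 0) (hα : α ≠ 1)
    (hax : a * (1 - α) = x ^ 2) (hby : b * (1 - β) = y ^ 2) (hγ : γ ^ 2 = 1 - α * β) :
    ∃ X Y Z : K, (X, Y, Z) ≠ (0, 0, 0) ∧ a * X ^ 2 + b * Y ^ 2 = Z ^ 2 := by
  obtain ⟨s, hs⟩ := exists_one_sub_add_one_sub_mul_sq_eq_sq h2 hγ
  have hx : x ≠ 0 := by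
    rintro rfl
    simp [ha, sub_eq_zero, hα.symm] at hax
  refine ⟨x / a, y * s / b, 1 + s, by simp [ha, hx], ?_⟩
  rw [← hs, div_pow, mul_div_assoc', div_pow, mul_pow, ← hax, ← hby]
  field_simp

theorem ENat.exists_lt_lt_le_add_add_one {p q : ℕ∞} {N : ℕ} (h : (N : ℕ∞) < p + q)
    (hp : p ≤ N) (hq : q ≤ N) : ∃ m n : ℕ, (m : ℕ∞) < p ∧ (n : ℕ∞) < q ∧ N ≤ m + n + 1 := by
  lift p to ℕ using (hp.trans_lt (ENat.natCast_lt_top N)).ne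
  lift q to ℕ using (hq.trans_lt (ENat.natCast_lt_top N)).ne
  norm_cast at h hp hq
  exact ⟨p - 1, q - 1, by norm_cast; omega, by norm_cast; omega, by omega⟩

theorem WithTop.coe_add_one_le_of_lt_map_toNat {n : ℕ} {w : WithTop ℤ}
    (h : (n : ℕ∞) < w.map Int.toNat) : ((n + 1 : ℤ) : WithTop ℤ) ≤ w := by
  induction w with
  | top => exact le_top
  | coe m =>
    rw [WithTop.map_coe] at h
    have : n < m.toNat := WithTop.coe_lt_coe.mp h
    exact WithTop.coe_le_coe.mpr (by omega)

def twoPowNegDiv (e : ℕ) (w : WithTop ℤ) : ℝ :=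
  (w.map fun m : ℤ => (2 : ℝ) ^ (-(m : ℝ) / e)).untopD 0

section twoPowNegDiv

variable (e : ℕ)

@[simp] theorem twoPowNegDiv_top : twoPowNegDiv e ⊤ = 0 := rfl

@[simp] theorem twoPowNegDiv_coe (m : ℤ) : twoPowNegDiv e m = (2 : ℝ) ^ (-(m : ℝ) / e) := rfl

theorem twoPowNegDiv_nonneg (w : WithTop ℤ) : 0 ≤ twoPowNegDiv e w := by
  induction w with
  | top => exact le_rfl
  | coe m => exact Real.rpow_nonneg zero_le_two _

theorem twoPowNegDiv_eq_zero_iff {w : WithTop ℤ} : twoPowNegDiv e w = 0 ↔ w = ⊤ := by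
  induction w with
  | top => simp
  | coe m => simp [(Real.rpow_pos_of_pos two_pos _).ne']

theorem twoPowNegDiv_add (v w : WithTop ℤ) :
    twoPowNegDiv e (v + w) = twoPowNegDiv e v * twoPowNegDiv e w := by
  induction v with
  | top => simp
  | coe m =>
    induction w with
    | top => simp
    | coe n =>
      simp only [← WithTop.coe_add, twoPowNegDiv_coe, ← Real.rpow_add two_pos]
      push_cast
      ring_nf

theorem antitone_twoPowNegDiv : Antitone (twoPowNegDiv e) := by
  intro v w hvw
  induction w with
  | top => exact twoPowNegDiv_nonneg e v
  | coe n =>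
    induction v with
    | top => exact absurd hvw (by simp)
    | coe m =>
      rw [twoPowNegDiv_coe, twoPowNegDiv_coe]
      refine Real.rpow_le_rpow_of_exponent_le one_le_two
        (div_le_div_of_nonneg_right (neg_le_neg ?_) e.cast_nonneg)
      exact_mod_cast WithTop.coe_le_coe.mp hvw

end twoPowNegDiv

theorem exists_mul_one_sub_eq_sq_of_lt_ddefect {F : Type*} [Field F] {ord : F → WithTop ℤ} {c : F}
    (hc : c ≠ 0) {n : ℕ} (hn : (n : ℕ∞) < ddefect ord c) :
    ∃ x α : F, c * (1 - α) = x ^ 2 ∧ ((n + 1 : ℤ) : WithTop ℤ) ≤ ord α := by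
  obtain ⟨x, hx⟩ := lt_iSup_iff.mp hn
  exact ⟨x, c⁻¹ * (c - x ^ 2), by field_simp; ring, WithTop.coe_add_one_le_of_lt_map_toNat hx⟩

namespace IsDyadicOrd

variable {F : Type*} [Field F] [Algebra ℚ_[2] F] {ord : F → WithTop ℤ} (hv : IsDyadicOrd ord)
include hv

theorem map_one : ord 1 = 0 := by
  have h := hv.map_mul 1 1
  rw [one_mul] at h
  obtain ⟨m, hm⟩ := WithTop.ne_top_iff_exists.mp (hv.ne_top 1 one_ne_zero)
  rw [← hm] at h ⊢
  norm_cast at h ⊢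
  omega

def addValuation : AddValuation F (WithTop ℤ) :=
  AddValuation.of ord hv.map_zero hv.map_one hv.min_le_add hv.map_mul

@[simp] theorem addValuation_apply (x : F) : hv.addValuation x = ord x := rfl

theorem ord_pow {x : F} {m : ℤ} (hm : ord x = m) (n : ℕ) : ord (x ^ n) = (n * m : ℤ) := by
  rw [← hv.addValuation_apply, AddValuation.map_pow, hv.addValuation_apply, hm,
    ← WithTop.coe_nsmul, nsmul_eq_mul]

theorem ord_zpow {x : F} {m : ℤ} (hm : ord x = m) (k : ℤ) : ord (x ^ k) = (k * m : ℤ) := by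
  cases k with
  | ofNat n => rw [Int.ofNat_eq_natCast, zpow_natCast]; exact hv.ord_pow hm n
  | negSucc n =>
    rw [zpow_negSucc, ← hv.addValuation_apply, AddValuation.map_inv, hv.addValuation_apply,
      hv.ord_pow hm, ← WithTop.LinearOrderedAddCommGroup.coe_neg, Int.negSucc_eq]
    congr 1
    push_cast
    ring

theorem ord_algebraMap {e : ℕ} (he : ord 2 = e) {q : ℚ_[2]} (hq : q ≠ 0) :
    ord (algebraMap ℚ_[2] F q) = (q.valuation * e : ℤ) := by
  set u := q * 2 ^ (-q.valuation)
  have hu : u.valuation = 0 := by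
    rw [Padic.valuation_mul hq (zpow_ne_zero _ two_ne_zero), Padic.valuation_zpow]
    simp
  have h2 : (2 : F) ≠ 0 := fun h => by simp [h, hv.map_zero] at he
  have hq' : algebraMap ℚ_[2] F q = algebraMap ℚ_[2] F u * 2 ^ q.valuation := by
    rw [RingHom.map_mul, map_zpow₀, map_ofNat, mul_assoc, ← zpow_add₀ h2, neg_add_cancel,
      zpow_zero, mul_one]
  rw [hq', hv.map_mul, hv.compat u (mul_ne_zero hq (zpow_ne_zero _ two_ne_zero)) hu,
    hv.ord_zpow he, zero_add]

theorem ne_one_of_ord_pos {α : F} (hα : 0 < ord α) : α ≠ 1 := by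
  rintro rfl
  exact hα.ne' hv.map_one

theorem one_le_of_ord_two_eq [FiniteDimensional ℚ_[2] F] {e : ℕ} (he : ord 2 = e) : 1 ≤ e := by
  by_contra! he0
  obtain rfl : e = 0 := by omega
  -- Now `ord` vanishes on `ℚ_[2]ˣ`, so the nonzero terms of a linear relation among
  -- `1, π, …, π ^ d` have pairwise distinct orders and cannot cancel.
  obtain ⟨π, hπ⟩ := hv.surj 1
  have hterm : ∀ (q : ℚ_[2]) (i : ℕ), q ≠ 0 → ord (q • π ^ i) = (i : ℤ) := fun q i hq => by
    rw [Algebra.smul_def, hv.map_mul, hv.ord_algebraMap he hq, hv.ord_pow hπ]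
    simp
  set d := Module.finrank ℚ_[2] F
  have hdep : ¬ LinearIndependent ℚ_[2] fun i : Fin (d + 1) => π ^ (i : ℕ) := fun h => by
    simpa [d] using h.fintype_card_le_finrank
  obtain ⟨g, hg, i₀, hi₀⟩ := Fintype.not_linearIndependent_iff.mp hdep
  classical
  obtain ⟨j, hj, hjmin⟩ :=
    Finset.exists_min_image (Finset.univ.filter (g · ≠ 0)) id ⟨i₀, by simpa using hi₀⟩
  rw [Finset.mem_filter] at hj
  have hrest : ((j : ℕ) : ℤ) < ord (∑ i ∈ Finset.univ.erase j, g i • π ^ (i : ℕ)) := by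
    refine hv.addValuation.map_lt_sum WithTop.coe_ne_top fun i hi => ?_
    rw [addValuation_apply]
    by_cases hgi : g i = 0
    · simp [hgi, hv.map_zero]
    · rw [hterm _ _ hgi]
      have hji : j < i := lt_of_le_of_ne (hjmin i (by simp [hgi])) (Finset.ne_of_mem_erase hi).symm
      exact WithTop.coe_lt_coe.mpr (by exact_mod_cast hji)
  have hsum := hv.addValuation.map_add_eq_of_lt_left ((hterm _ _ hj.2).trans_lt hrest)
  rw [addValuation_apply, Finset.add_sum_erase _ (fun i => g i • π ^ (i : ℕ)) hj.1, hg,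
    addValuation_apply, hv.map_zero, hterm _ _ hj.2] at hsum
  exact WithTop.top_ne_coe hsum

theorem isNonarchimedean_twoPowNegDiv (e : ℕ) : IsNonarchimedean fun x => twoPowNegDiv e (ord x) :=
  fun x y => ((antitone_twoPowNegDiv e) (hv.min_le_add x y)).trans_eq
    ((antitone_twoPowNegDiv e).map_min)

/-- Normalised by `e` so that it restricts to the `2`-adic norm on `ℚ_[2]`. -/
def absoluteValue (e : ℕ) : AbsoluteValue F ℝ where
  toFun x := twoPowNegDiv e (ord x)
  map_mul' x y := by simp only [hv.map_mul, twoPowNegDiv_add]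
  nonneg' x := twoPowNegDiv_nonneg e _
  eq_zero' x := (twoPowNegDiv_eq_zero_iff e).trans hv.addValuation.top_iff
  add_le' x y := (hv.isNonarchimedean_twoPowNegDiv e x y).trans
    (max_le_add_of_nonneg (twoPowNegDiv_nonneg e _) (twoPowNegDiv_nonneg e _))

theorem absoluteValue_algebraMap {e : ℕ} (he : ord 2 = e) (he0 : e ≠ 0) (q : ℚ_[2]) :
    hv.absoluteValue e (algebraMap ℚ_[2] F q) = ‖q‖ := by
  rcases eq_or_ne q 0 with rfl | hq
  · simp
  change twoPowNegDiv e _ = _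
  rw [hv.ord_algebraMap he hq, twoPowNegDiv_coe, Padic.norm_eq_zpow_neg_valuation hq,
    ← Real.rpow_intCast]
  push_cast
  congr 1
  field_simp

theorem absoluteValue_lt_one {e : ℕ} (he0 : e ≠ 0) {x : F} (hx : 0 < ord x) :
    hv.absoluteValue e x < 1 := by
  change twoPowNegDiv e (ord x) < 1
  induction h : ord x with
  | top => simp
  | coe m =>
    rw [h] at hx
    have hm : (0 : ℝ) < m := by exact_mod_cast WithTop.coe_lt_coe.mp hx
    exact Real.rpow_lt_one_of_one_lt_of_neg one_lt_two
      (div_neg_of_neg_of_pos (neg_neg_of_pos hm) (by positivity))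

theorem exists_add_sq_eq [FiniteDimensional ℚ_[2] F] {e : ℕ} (he : ord 2 = e) {δ : F}
    (hδ : 0 < ord δ) : ∃ t : F, t + t ^ 2 = δ := by
  have he0 : e ≠ 0 := Nat.one_le_iff_ne_zero.mp (hv.one_le_of_ord_two_eq he)
  let _ : NormedField F := (hv.absoluteValue e).toNormedField
  let _ : NormedSpace ℚ_[2] F :=
    { norm_smul_le q x := by
        rw [Algebra.smul_def, norm_mul]
        exact (congrArg (· * ‖x‖) (hv.absoluteValue_algebraMap he he0 q)).le }
  have _ : CompleteSpace F := FiniteDimensional.complete ℚ_[2] F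
  have _ : IsUltrametricDist F :=
    IsUltrametricDist.isUltrametricDist_of_isNonarchimedean_norm
      (hv.isNonarchimedean_twoPowNegDiv e)
  exact exists_add_sq_eq_of_norm_lt_one (hv.absoluteValue_lt_one he0 hδ)

theorem exists_sq_eq_one_sub [FiniteDimensional ℚ_[2] F] {e : ℕ} (he : ord 2 = e) {ε : F}
    (hε : ((2 * e + 1 : ℤ) : WithTop ℤ) ≤ ord ε) : ∃ γ : F, γ ^ 2 = 1 - ε := by
  have : CharZero F := charZero_of_injective_algebraMap (algebraMap ℚ_[2] F).injective
  have h4 : ord (4 : F) = (2 * e : ℤ) := by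
    rw [show (4 : F) = 2 * 2 by norm_num, hv.map_mul, he]
    norm_cast
    ring
  obtain ⟨t, ht⟩ := hv.exists_add_sq_eq he (δ := -ε / 4) (by
    have hord : ord ε = (2 * e : ℤ) + ord (-ε / 4) := by
      rw [← h4, ← hv.map_mul, show 4 * (-ε / 4) = -ε by field_simp]
      exact (hv.addValuation.map_neg ε).symm
    rw [hord, WithTop.coe_add] at hε
    exact (WithTop.coe_lt_coe.mpr one_pos).trans_le
      ((WithTop.add_le_add_iff_left WithTop.coe_ne_top).mp hε))
  exact ⟨1 + 2 * t, by linear_combination 4 * ht⟩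

theorem isSquare_of_lt_ddefect [FiniteDimensional ℚ_[2] F] {e : ℕ} (he : ord 2 = e) {c : F}
    (hc : c ≠ 0) (h : (2 * e : ℕ∞) < ddefect ord c) : IsSquare c := by
  obtain ⟨x, α, hx, hα⟩ :=
    exists_mul_one_sub_eq_sq_of_lt_ddefect hc (n := 2 * e) (by exact_mod_cast h)
  obtain ⟨γ, hγ⟩ := hv.exists_sq_eq_one_sub he (by exact_mod_cast hα)
  have hγ0 : γ ≠ 0 := by
    rintro rfl
    refine hv.ne_one_of_ord_pos (hα.trans_lt' ?_) (by linear_combination hγ)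
    exact_mod_cast (by omega : (0 : ℤ) < 2 * e + 1)
  exact ⟨x / γ, by field_simp; linear_combination hx + c * hγ⟩

end IsDyadicOrd

/-- if `d(a) + d(b) > 2e` then `(a,b)_ℙ = 1`. -/
theorem stmt3 {F : Type*} [Field F] [Algebra ℚ_[2] F] [FiniteDimensional ℚ_[2] F]
    (ord : F → WithTop ℤ) (hv : IsDyadicOrd ord)
    (e : ℕ) (he : ord (2 : F) = ((e : ℤ) : WithTop ℤ))
    (a b : F) (ha : a ≠ 0) (hb : b ≠ 0)
    (h : (2 * e : ℕ∞) < ddefect ord a + ddefect ord b) :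
    hilbertSym F a b = 1 := by
  have : CharZero F := charZero_of_injective_algebraMap (algebraMap ℚ_[2] F).injective
  rw [hilbertSym, if_pos]
  rcases lt_or_ge (2 * e : ℕ∞) (ddefect ord a) with hda | hda
  · obtain ⟨t, rfl⟩ := hv.isSquare_of_lt_ddefect he ha hda
    exact ⟨1, 0, t, by simp, by ring⟩
  rcases lt_or_ge (2 * e : ℕ∞) (ddefect ord b) with hdb | hdb
  · obtain ⟨t, rfl⟩ := hv.isSquare_of_lt_ddefect he hb hdb
    exact ⟨0, 1, t, by simp, by ring⟩
  obtain ⟨m, n, hm, hn, hmn⟩ := ENat.exists_lt_lt_le_add_add_one (N := 2 * e)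
    (by exact_mod_cast h) (by exact_mod_cast hda) (by exact_mod_cast hdb)
  obtain ⟨x, α, hx, hα⟩ := exists_mul_one_sub_eq_sq_of_lt_ddefect ha hm
  obtain ⟨y, β, hy, hβ⟩ := exists_mul_one_sub_eq_sq_of_lt_ddefect hb hn
  obtain ⟨γ, hγ⟩ := hv.exists_sq_eq_one_sub he (ε := α * β) (by
    rw [hv.map_mul]
    refine le_trans ?_ (add_le_add hα hβ)
    exact_mod_cast (by omega : (2 * e + 1 : ℤ) ≤ (m + 1) + (n + 1)))
  exact exists_isotropic_of_mul_one_sub_eq_sq two_ne_zero ha hb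
    (hv.ne_one_of_ord_pos ((WithTop.coe_lt_coe.mpr (by omega)).trans_le hα)) hx hy hγ
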